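/- Let G be a connected simple graph with n vertices, m edges and cyclomatic number γ = m − n + 1. Suppose G has at least one vertex of degree 1 and 0 < nᵢ < n for some i with 3 ≤ i ≤ n − 1. Then the number m_{i,i} of edges joining two vertices of degree i satisfies m_{i,i} ≤ nᵢ − 1 + γ. -/

import Mathlib

open Finset

/-- Number of vertices of degree `i` in `G`. -/
def nDeg {V : Type*} [Fintype V] (G : SimpleGraph V) [DecidableRel G.Adj] (i : ℕ) : ℕ :=
  (Finset.univ.filter (fun v => G.degree v = i)).card

open scoped Classical in
/-- Number of edges of `G` joining a vertex of degree `i` with a vertex of degree `j`. -/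
noncomputable def mEdges {V : Type*} [Fintype V] [DecidableEq V] (G : SimpleGraph V)
    [DecidableRel G.Adj] (i j : ℕ) : ℕ :=
  (G.edgeFinset.filter
    (fun e => ∃ u v, e = s(u, v) ∧ G.degree u = i ∧ G.degree v = j)).card

/-- The Randić index of a graph. -/
noncomputable def randic {V : Type*} [Fintype V] [DecidableEq V] (G : SimpleGraph V)
    [DecidableRel G.Adj] : ℝ :=
  ∑ e ∈ G.edgeFinset,
    Sym2.lift ⟨fun u v => 1 / Real.sqrt ((G.degree u : ℝ) * (G.degree v : ℝ)),
      fun u v => by simp [mul_comm]⟩ e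

/-! Orient every vertex `v ∉ S` towards a fixed root `r ∈ S` along a shortest path. The first
edge of that path is not contained in `S`, and distinct vertices give distinct edges because the
distance to `r` strictly drops along each of them. Hence a connected graph has at least `|V \ S|`
edges leaving `S`, i.e. at most `|E| - |V| + |S|` edges inside `S`; take `S` to be the vertices
of degree `i`. -/

namespace SimpleGraph

variable {V : Type*} (G : SimpleGraph V)

lemma Connected.exists_adj_dist_lt (hconn : G.Connected) {v r : V} (h : v ≠ r) :
    ∃ w, G.Adj v w ∧ G.dist w r < G.dist v r := by
  obtain ⟨p, hp⟩ := hconn.exists_walk_length_eq_dist v r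
  cases p with
  | nil => exact absurd rfl h
  | @cons _ w _ hadj q =>
    refine ⟨w, hadj, ?_⟩
    calc G.dist w r ≤ q.length := dist_le q
    _ < _ := by rw [← hp]; simp

variable [Fintype V] [DecidableEq V] [DecidableRel G.Adj]

lemma Connected.card_compl_le_card_edges_not_subset (hconn : G.Connected) {S : Finset V}
    (hS : S.Nonempty) : Sᶜ.card ≤ (G.edgeFinset.filter fun e => ∃ v ∈ e, v ∉ S).card := by
  obtain ⟨r, hr⟩ := hS
  have hne : ∀ v ∈ Sᶜ, v ≠ r := fun v hv hvr => mem_compl.mp hv (hvr ▸ hr)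
  choose parent hadj hdist using fun v (h : v ≠ r) => hconn.exists_adj_dist_lt G h
  refine card_le_card_of_injOn
    (fun v => if h : v = r then s(v, v) else s(v, parent v h)) (fun v hv => ?_) ?_
  · simp only [dif_neg (hne v hv), coe_filter, Set.mem_ofPred_eq, mem_edgeFinset, mem_edgeSet]
    exact ⟨hadj v _, v, Sym2.mem_mk_left _ _, mem_compl.mp hv⟩
  · intro x hx y hy hxy
    simp only [dif_neg (hne x hx), dif_neg (hne y hy), Sym2.eq_iff] at hxy
    rcases hxy with ⟨hxy, -⟩ | ⟨hx_py, hpx_y⟩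
    · exact hxy
    · have hx := hdist x (hne x hx)
      have hy := hdist y (hne y hy)
      rw [hpx_y] at hx
      rw [← hx_py] at hy
      omega

lemma Connected.card_edges_subset_add_card_compl_le (hconn : G.Connected) {S : Finset V}
    (hS : S.Nonempty) :
    (G.edgeFinset.filter fun e => ∀ v ∈ e, v ∈ S).card + Sᶜ.card ≤ G.edgeFinset.card := by
  have hsplit := card_filter_add_card_filter_not (s := G.edgeFinset) (fun e => ∀ v ∈ e, v ∈ S)
  simp only [not_forall, exists_prop] at hsplit
  have := hconn.card_compl_le_card_edges_not_subset G hS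
  omega

end SimpleGraph

open scoped Classical in
lemma mEdges_self_eq {V : Type*} [Fintype V] [DecidableEq V] (G : SimpleGraph V)
    [DecidableRel G.Adj] (i : ℕ) :
    mEdges G i i =
      (G.edgeFinset.filter fun e => ∀ v ∈ e, v ∈ univ.filter (G.degree · = i)).card := by
  unfold mEdges
  congr 1
  refine filter_congr fun e _ => ?_
  induction e using Sym2.ind with
  | _ a b =>
    simp only [Sym2.mem_iff, forall_eq_or_imp, forall_eq, mem_filter, mem_univ, true_and]
    constructor
    · rintro ⟨u, v, huv, hu, hv⟩
      rcases Sym2.eq_iff.mp huv with ⟨rfl, rfl⟩ | ⟨rfl, rfl⟩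
      exacts [⟨hu, hv⟩, ⟨hv, hu⟩]
    · rintro ⟨ha, hb⟩
      exact ⟨a, b, rfl, ha, hb⟩

theorem stmt_13_general {V : Type*} [Fintype V] [DecidableEq V] (G : SimpleGraph V) [DecidableRel G.Adj]
    (n m γ : ℕ) (hconn : G.Connected) (hn : Fintype.card V = n)
    (hm : G.edgeFinset.card = m) (hγ : (γ : ℤ) = (m : ℤ) - n + 1)
    (i : ℕ) (hpos : 0 < nDeg G i) :
    (mEdges G i i : ℤ) ≤ (nDeg G i : ℤ) - 1 + γ := by
  classical
  set S := univ.filter (G.degree · = i)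
  have hbound := hconn.card_edges_subset_add_card_compl_le G (S := S) (card_pos.mp hpos)
  rw [← mEdges_self_eq, hm, card_compl, hn] at hbound
  have hSn : S.card ≤ n := hn ▸ card_le_univ S
  change mEdges G i i + (n - nDeg G i) ≤ m at hbound
  omega

theorem stmt_13 {V : Type*} [Fintype V] [DecidableEq V] (G : SimpleGraph V) [DecidableRel G.Adj]
    (n m γ : ℕ) (hconn : G.Connected) (hn : Fintype.card V = n)
    (hm : G.edgeFinset.card = m) (hγ : (γ : ℤ) = (m : ℤ) - n + 1)
    (h1 : 1 ≤ nDeg G 1) (i : ℕ) (hi3 : 3 ≤ i) (hin : i ≤ n - 1)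
    (hpos : 0 < nDeg G i) (hlt : nDeg G i < n) :
    (mEdges G i i : ℤ) ≤ (nDeg G i : ℤ) - 1 + γ :=
  stmt_13_general G n m γ hconn hn hm hγ i hpos
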